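/- Let L ∈ ℝ^{n×n} be symmetric positive semidefinite, let V ∈ ℝ^{n×k} satisfy Vᵀ V = I_k, let P ∈ ℝ^{n×k}, and let 0 ≤ ε < 1. Suppose that for every y in the column space of P, ‖y − V Vᵀ y‖_L ≤ ε ‖y‖_L. Then for every x ∈ ℝ^k there exists y in the column space C of V (namely y = V Vᵀ P x) such that |yᵀ L y − xᵀ (Pᵀ L P) x| ≤ 3ε ‖P x‖_L². -/

import Mathlib

/-!
With `u = P x` and `d = u - V Vᵀ u`, the vector `y = V Vᵀ u` is `u - d`, and the hypothesis gives
`‖d‖_L ≤ ε ‖u‖_L`. Since `‖·‖_L` is a seminorm, the triangle inequality puts `‖u - d‖_L` within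
`ε ‖u‖_L` of `‖u‖_L`, so `|‖u - d‖_L² - ‖u‖_L²| ≤ ε (2 + ε) ‖u‖_L² ≤ 3 ε ‖u‖_L²`.
-/

open Matrix

/-- The L-seminorm ‖y‖_L = √(yᵀ L y) of a vector, for L symmetric PSD. -/
noncomputable def Lnorm {n : ℕ} (L : Matrix (Fin n) (Fin n) ℝ) (y : Fin n → ℝ) : ℝ :=
  Real.sqrt (y ⬝ᵥ (L *ᵥ y))

theorem abs_norm_sub_sq_sub_norm_sq_le {E : Type*} [SeminormedAddCommGroup E] {u d : E} {ε : ℝ}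
    (hε0 : 0 ≤ ε) (hε1 : ε ≤ 1) (h : ‖d‖ ≤ ε * ‖u‖) :
    |‖u - d‖ ^ 2 - ‖u‖ ^ 2| ≤ 3 * ε * ‖u‖ ^ 2 := by
  have hdiff : |‖u - d‖ - ‖u‖| ≤ ε * ‖u‖ :=
    calc |‖u - d‖ - ‖u‖| ≤ ‖(u - d) - u‖ := abs_norm_sub_norm_le _ _
      _ = ‖d‖ := by rw [sub_sub_cancel_left, norm_neg]
      _ ≤ ε * ‖u‖ := h
  have hsum : |‖u - d‖ + ‖u‖| ≤ (2 + ε) * ‖u‖ := by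
    rw [abs_of_nonneg (by positivity)]
    linarith [abs_le.mp hdiff]
  calc |‖u - d‖ ^ 2 - ‖u‖ ^ 2| = |‖u - d‖ - ‖u‖| * |‖u - d‖ + ‖u‖| := by
        rw [← abs_mul]; ring_nf
    _ ≤ ε * ‖u‖ * ((2 + ε) * ‖u‖) := by gcongr
    _ ≤ 3 * ε * ‖u‖ ^ 2 := by nlinarith [mul_nonneg hε0 (sq_nonneg ‖u‖)]

theorem dotProduct_transpose_mul_mul_mulVec {m n R : Type*} [Fintype m] [Fintype n]
    [CommSemiring R] (P : Matrix m n R) (L : Matrix m m R) (x : n → R) :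
    x ⬝ᵥ ((Pᵀ * L * P) *ᵥ x) = (P *ᵥ x) ⬝ᵥ (L *ᵥ (P *ᵥ x)) := by
  rw [← mulVec_mulVec, ← mulVec_mulVec, dotProduct_mulVec, vecMul_transpose]

section Lnorm

variable {n : ℕ} {L : Matrix (Fin n) (Fin n) ℝ}

theorem Lnorm_eq_norm (hL : L.PosSemidef) (y : Fin n → ℝ) :
    Lnorm L y = @norm _ (L.toSeminormedAddCommGroup hL).toNorm y := by
  rw [Lnorm, dotProduct_comm]
  rfl

theorem Lnorm_sq (hL : L.PosSemidef) (y : Fin n → ℝ) : Lnorm L y ^ 2 = y ⬝ᵥ (L *ᵥ y) :=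
  Real.sq_sqrt (by simpa only [star_trivial] using hL.dotProduct_mulVec_nonneg y)

theorem abs_Lnorm_sub_sq_sub_Lnorm_sq_le (hL : L.PosSemidef) {u d : Fin n → ℝ} {ε : ℝ}
    (hε0 : 0 ≤ ε) (hε1 : ε ≤ 1) (h : Lnorm L d ≤ ε * Lnorm L u) :
    |Lnorm L (u - d) ^ 2 - Lnorm L u ^ 2| ≤ 3 * ε * Lnorm L u ^ 2 := by
  let := L.toSeminormedAddCommGroup hL
  simp only [Lnorm_eq_norm hL] at h ⊢
  exact abs_norm_sub_sq_sub_norm_sq_le hε0 hε1 h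

end Lnorm

theorem stmt_13_general {n k : ℕ} (L : Matrix (Fin n) (Fin n) ℝ) (hL : L.PosSemidef)
    (V : Matrix (Fin n) (Fin k) ℝ) (P : Matrix (Fin n) (Fin k) ℝ)
    (ε : ℝ) (hε0 : 0 ≤ ε) (hε1 : ε < 1)
    (happrox : ∀ y : Fin n → ℝ, (∃ x : Fin k → ℝ, y = P *ᵥ x) →
      Lnorm L (y - V *ᵥ (Vᵀ *ᵥ y)) ≤ ε * Lnorm L y) :
    ∀ x : Fin k → ℝ,
      ∃ y : Fin n → ℝ, (∃ z : Fin k → ℝ, y = V *ᵥ z) ∧ y = V *ᵥ (Vᵀ *ᵥ (P *ᵥ x)) ∧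
        |y ⬝ᵥ (L *ᵥ y) - x ⬝ᵥ ((Pᵀ * L * P) *ᵥ x)| ≤
          3 * ε * ((P *ᵥ x) ⬝ᵥ (L *ᵥ (P *ᵥ x))) := by
  intro x
  refine ⟨_, ⟨_, rfl⟩, rfl, ?_⟩
  have key := abs_Lnorm_sub_sq_sub_Lnorm_sq_le hL hε0 hε1.le (happrox (P *ᵥ x) ⟨x, rfl⟩)
  rw [sub_sub_cancel, Lnorm_sq hL, Lnorm_sq hL] at key
  rwa [dotProduct_transpose_mul_mul_mulVec]

/-- Let L ∈ ℝ^{n×n} be symmetric PSD, V ∈ ℝ^{n×k} with Vᵀ V = I_k,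
P ∈ ℝ^{n×k}, and 0 ≤ ε < 1.  If ‖y − V Vᵀ y‖_L ≤ ε ‖y‖_L for all y in the column
space of P, then for every x ∈ ℝ^k there is y in the column space of V
(namely y = V Vᵀ P x) such that |yᵀ L y − xᵀ (Pᵀ L P) x| ≤ 3 ε ‖P x‖_L². -/
theorem stmt_13 {n k : ℕ} (L : Matrix (Fin n) (Fin n) ℝ) (hL : L.PosSemidef)
    (V : Matrix (Fin n) (Fin k) ℝ) (hV : Vᵀ * V = 1) (P : Matrix (Fin n) (Fin k) ℝ)
    (ε : ℝ) (hε0 : 0 ≤ ε) (hε1 : ε < 1)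
    (happrox : ∀ y : Fin n → ℝ, (∃ x : Fin k → ℝ, y = P *ᵥ x) →
      Lnorm L (y - V *ᵥ (Vᵀ *ᵥ y)) ≤ ε * Lnorm L y) :
    ∀ x : Fin k → ℝ,
      ∃ y : Fin n → ℝ, (∃ z : Fin k → ℝ, y = V *ᵥ z) ∧ y = V *ᵥ (Vᵀ *ᵥ (P *ᵥ x)) ∧
        |y ⬝ᵥ (L *ᵥ y) - x ⬝ᵥ ((Pᵀ * L * P) *ᵥ x)| ≤
          3 * ε * ((P *ᵥ x) ⬝ᵥ (L *ᵥ (P *ᵥ x))) :=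
  stmt_13_general L hL V P ε hε0 hε1 happrox
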